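/- Let X^{(1)},…,X^{(n)} be real payoff tensors of format d_1×···×d_n, set m = d_1 + ⋯ + d_n, and consider the Konstanz matrix K_X(x) with entries in the polynomial ring ℝ[x_1,…,x_n]. Then every m×m minor of K_X(x) (the determinant of the submatrix on any m of the ∏_i d_i columns), viewed as a polynomial in x_1,…,x_n, has total degree at most d_1 + d_2 + ⋯ + d_n − n + 1. -/

import Mathlib

/-!
Entrywise, the minor is `xᵢ · A r c + B r c` in row `r = (i, k)`, with real matrices `A` (the 0/1
pattern of `K_X`) and `B`. Multilinearity of the determinant in the rows expands it as
`∑ₛ (∏_{r ∈ s} x_{r.1}) · det Aₛ`, where `Aₛ` takes the rows in `s` from `A` and the others from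
`B`. Each column of `A` has exactly one `1` in every block of rows `{i} × [dᵢ]`, so the rows of a
block of `A` sum to the all-ones vector, and `det Aₛ = 0` once `s` contains two whole blocks.
Any other `s` misses a row in all blocks but one, so `|s| ≤ ∑ dᵢ - n + 1`.
-/

open Finset MvPolynomial

namespace Matrix

variable {m R : Type*} [Fintype m] [DecidableEq m] [CommRing R]

theorem det_eq_zero_of_sum_rows_eq (A : Matrix m m R) {I J : Finset m} (hIJ : Disjoint I J)
    (hI : I.Nonempty) (h : ∀ c, ∑ r ∈ I, A r c = ∑ r ∈ J, A r c) : A.det = 0 := by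
  obtain ⟨j, hj⟩ := hI
  let coeff : m → R := fun k => (if k ∈ I then 1 else 0) - if k ∈ J then 1 else 0
  have hrel : ∑ k, coeff k • A k = 0 := by
    ext c
    simp [coeff, sub_mul, h c]
  have hj_coeff : coeff j = 1 := by simp [coeff, hj, disjoint_left.mp hIJ hj]
  rw [← one_smul R A.det, ← hj_coeff, ← det_updateRow_sum, hrel]
  exact det_eq_zero_of_row_eq_zero j (by simp)

variable {σ : Type*}

theorem det_of_mul_C_add_C (x : m → MvPolynomial σ R) (A B : Matrix m m R) :
    (of fun r c => x r * C (A r c) + C (B r c)).det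
      = ∑ s : Finset m, (∏ r ∈ s, x r) * C (of (s.piecewise A B)).det := by
  let U : m → m → MvPolynomial σ R := fun r c => x r * C (A r c)
  let V : m → m → MvPolynomial σ R := fun r c => C (B r c)
  calc (of fun r c => x r * C (A r c) + C (B r c)).det = detRowAlternating (U + V) := rfl
    _ = ∑ s : Finset m, detRowAlternating (s.piecewise U V) := detRowAlternating.map_add_univ U V
    _ = _ := sum_congr rfl fun s _ => ?_
  have hrows : s.piecewise U V = of fun r c =>
      (if r ∈ s then x r else 1) * (C : R →+* _).mapMatrix (of (s.piecewise A B)) r c := by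
    funext r c
    by_cases hr : r ∈ s
    · simp [U, hr, piecewise_eq_of_mem s A B hr]
    · simp [V, hr, piecewise_eq_of_notMem s A B hr]
  rw [hrows, ← det, det_mul_column, prod_ite_mem, univ_inter, ← RingHom.map_det]

theorem totalDegree_det_of_mul_C_add_C_le (x : m → MvPolynomial σ R) (A B : Matrix m m R)
    (hx : ∀ r, (x r).totalDegree ≤ 1) {N : ℕ}
    (hN : ∀ s : Finset m, (of (s.piecewise A B)).det ≠ 0 → #s ≤ N) :
    (of fun r c => x r * C (A r c) + C (B r c)).det.totalDegree ≤ N := by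
  rw [det_of_mul_C_add_C]
  refine totalDegree_finsetSum_le fun s _ => ?_
  by_cases hs : (of (s.piecewise A B)).det = 0
  · simp [hs]
  calc _ ≤ (∏ r ∈ s, x r).totalDegree + (C (of (s.piecewise A B)).det).totalDegree :=
        totalDegree_mul _ _
    _ ≤ ∑ r ∈ s, (x r).totalDegree := by
        rw [totalDegree_C, add_zero]
        exact totalDegree_finsetProd _ _
    _ ≤ ∑ r ∈ s, 1 := sum_le_sum fun r _ => hx r
    _ = #s := (card_eq_sum_ones s).symm
    _ ≤ N := hN s hs

end Matrix

theorem Finset.card_add_card_le_card_sigma_add_one {ι : Type*} {κ : ι → Type*} [Fintype ι]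
    [∀ i, Fintype (κ i)] (s : Finset ((i : ι) × κ i))
    (hs : {i | ∀ k, ⟨i, k⟩ ∈ s}.Subsingleton) :
    #s + Fintype.card ι ≤ Fintype.card ((i : ι) × κ i) + 1 := by
  classical
  have hfull : #{i | ∀ k, ⟨i, k⟩ ∈ s} ≤ 1 :=
    card_le_one.mpr fun i hi j hj => hs (mem_filter.mp hi).2 (mem_filter.mp hj).2
  have hpartial : #{i | ¬∀ k, ⟨i, k⟩ ∈ s} ≤ #sᶜ :=
    calc #{i | ¬∀ k, ⟨i, k⟩ ∈ s} ≤ #(sᶜ.image Sigma.fst) :=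
          card_le_card fun i hi => by simpa [not_forall] using hi
      _ ≤ #sᶜ := card_image_le
  have := card_filter_add_card_filter_not (s := univ) fun i => ∀ k, ⟨i, k⟩ ∈ s
  have := card_compl s
  have := card_le_univ s
  rw [card_univ] at *
  omega

open Matrix in
theorem konstanz_minor_degree_bound
    (n : ℕ) (d : Fin n → ℕ) (hd : ∀ i, 1 ≤ d i)
    (X : Fin n → ((l : Fin n) → Fin (d l)) → ℝ)
    (K : Matrix ((i : Fin n) × Fin (d i)) ((l : Fin n) → Fin (d l))
      (MvPolynomial (Fin n) ℝ))
    (hK : ∀ (i : Fin n) (k : Fin (d i)) (j : (l : Fin n) → Fin (d l)),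
      K ⟨i, k⟩ j =
        if j i = k then MvPolynomial.X i - MvPolynomial.C (X i j) else 0)
    (cols : ((i : Fin n) × Fin (d i)) → ((l : Fin n) → Fin (d l))) :
    (Matrix.det (Matrix.of fun r r' => K r (cols r'))).totalDegree
      ≤ (∑ i, d i) - n + 1 := by
  let A : Matrix ((i : Fin n) × Fin (d i)) ((i : Fin n) × Fin (d i)) ℝ :=
    of fun r c => if cols c r.1 = r.2 then 1 else 0
  let B : Matrix ((i : Fin n) × Fin (d i)) ((i : Fin n) × Fin (d i)) ℝ :=
    of fun r c => if cols c r.1 = r.2 then -X r.1 (cols c) else 0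
  have hKAB : of (fun r r' => K r (cols r'))
      = of fun r c => MvPolynomial.X r.1 * C (A r c) + C (B r c) := by
    ext1 ⟨i, k⟩ c
    rw [of_apply, of_apply, hK]
    split_ifs with h <;> simp [A, B, h, sub_eq_add_neg]
  rw [hKAB]
  refine totalDegree_det_of_mul_C_add_C_le _ A B (fun r => (totalDegree_X _).le) fun s hs => ?_
  have hblock_sum : ∀ i, (∀ k, ⟨i, k⟩ ∈ s) → ∀ c,
      ∑ r ∈ univ.map (Function.Embedding.sigmaMk i), of (s.piecewise A B) r c = 1 := by
    intro i hi c
    rw [sum_map]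
    simp [piecewise_eq_of_mem s A B (hi _), A]
  have hfull : {i | ∀ k, ⟨i, k⟩ ∈ s}.Subsingleton := by
    intro i hi j hj
    by_contra hij
    refine hs (det_eq_zero_of_sum_rows_eq _ ?_ ⟨_, mem_map_of_mem _ (mem_univ ⟨0, hd i⟩)⟩
      fun c => (hblock_sum i hi c).trans (hblock_sum j hj c).symm)
    simp [disjoint_left, Ne.symm hij]
  have := card_add_card_le_card_sigma_add_one s hfull
  simp only [Fintype.card_sigma, Fintype.card_fin] at this
  omega
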